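/- arXiv:2504.18298 — 7 statements merged into one kernel-verified Lean document; each statement's English description precedes it below -/
import Mathlib

section
/- Let q be a natural number, R ≥ 0 a total demand, m : Fin q → ℝ capacities with m_k ≥ 0 for all k and R ≤ Σ_k m_k, and for each k let f_k : ℝ → ℝ be continuous and monotone nondecreasing. Then there exists a load vector X : Fin q → ℝ with X_k ≥ 0 for all k, Σ_k X_k = R, X_k ≤ m_k for all k, such that for all k, l : Fin q, if X_k > 0 and X_l < m_l then f_k(X_k) ≤ f_l(X_l). -/
open MeasureTheory Function

private lemma sum_updG {q : ℕ} (X : Fin q → ℝ) {k l : Fin q} (hkl : k ≠ l) (a b : ℝ)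
    (G : Fin q → ℝ → ℝ) :
    ∑ j, G j (Function.update (Function.update X k a) l b j)
      = ∑ j, G j (X j) - G k (X k) - G l (X l) + G k a + G l b := by
  classical
  set Y := Function.update (Function.update X k a) l b with hY
  have hl : l ∈ Finset.univ := Finset.mem_univ l
  have hk : k ∈ Finset.univ.erase l := Finset.mem_erase.2 ⟨hkl, Finset.mem_univ k⟩
  have e1 : ∑ j, G j (Y j) = G l (Y l) + ∑ j ∈ Finset.univ.erase l, G j (Y j) :=
    (Finset.add_sum_erase _ _ hl).symm
  have e2 : ∑ j ∈ Finset.univ.erase l, G j (Y j)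
      = G k (Y k) + ∑ j ∈ (Finset.univ.erase l).erase k, G j (Y j) :=
    (Finset.add_sum_erase _ _ hk).symm
  have e3 : ∑ j ∈ (Finset.univ.erase l).erase k, G j (Y j)
      = ∑ j ∈ (Finset.univ.erase l).erase k, G j (X j) := by
    refine Finset.sum_congr rfl fun j hj => ?_
    obtain ⟨hjk, hjl, -⟩ : j ≠ k ∧ j ≠ l ∧ True := by
      simp only [Finset.mem_erase] at hj; exact ⟨hj.1, hj.2.1, trivial⟩
    simp [hY, Function.update_of_ne hjl, Function.update_of_ne hjk]
  have e1' : ∑ j, G j (X j) = G l (X l) + ∑ j ∈ Finset.univ.erase l, G j (X j) :=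
    (Finset.add_sum_erase _ _ hl).symm
  have e2' : ∑ j ∈ Finset.univ.erase l, G j (X j)
      = G k (X k) + ∑ j ∈ (Finset.univ.erase l).erase k, G j (X j) :=
    (Finset.add_sum_erase _ _ hk).symm
  have hYl : Y l = b := Function.update_self _ _ _
  have hYk : Y k = a := by
    rw [hY, Function.update_of_ne hkl, Function.update_self]
  rw [e1, e2, e3, hYl, hYk, e1', e2']
  ring

/-- Existence of a capacitated Wardrop/Nash equilibrium load vector for continuous
nondecreasing latency functions, total demand `R`, and capacities `m`. -/
theorem stmt_6 (q : ℕ) (R : ℝ) (hR : 0 ≤ R)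
    (m : Fin q → ℝ) (hm : ∀ k, 0 ≤ m k) (hRm : R ≤ ∑ k, m k)
    (f : Fin q → ℝ → ℝ)
    (hcont : ∀ k, Continuous (f k)) (hmono : ∀ k, Monotone (f k)) :
    ∃ X : Fin q → ℝ,
      (∀ k, 0 ≤ X k) ∧
      (∑ k, X k = R) ∧
      (∀ k, X k ≤ m k) ∧
      (∀ k l, 0 < X k → X l < m l → f k (X k) ≤ f l (X l)) := by
  classical
  set S : Set (Fin q → ℝ) :=
    {X | (∀ k, 0 ≤ X k) ∧ (∀ k, X k ≤ m k) ∧ ∑ k, X k = R} with hSdef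
  -- Nonemptiness
  have hSne : S.Nonempty := by
    rcases eq_or_lt_of_le hR with h0 | h0
    · refine ⟨0, fun k => le_refl 0, fun k => hm k, ?_⟩
      simp [← h0]
    · have hs : 0 < ∑ k, m k := lt_of_lt_of_le h0 hRm
      refine ⟨fun k => (R / ∑ j, m j) * m k, ?_, ?_, ?_⟩
      · intro k
        exact mul_nonneg (div_nonneg hR hs.le) (hm k)
      · intro k
        have h1 : R / ∑ j, m j ≤ 1 := (div_le_one hs).2 hRm
        calc (R / ∑ j, m j) * m k ≤ 1 * m k :=
              mul_le_mul_of_nonneg_right h1 (hm k)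
          _ = m k := one_mul _
      · rw [← Finset.mul_sum, div_mul_cancel₀ _ (ne_of_gt hs)]
  -- Compactness
  have hScomp : IsCompact S := by
    have hsub : S ⊆ Set.Icc (0 : Fin q → ℝ) m := by
      intro X hX
      exact ⟨fun k => hX.1 k, fun k => hX.2.1 k⟩
    have hclosed : IsClosed S := by
      have h1 : IsClosed {X : Fin q → ℝ | ∀ k, 0 ≤ X k} := by
        have : {X : Fin q → ℝ | ∀ k, 0 ≤ X k} = ⋂ k, {X : Fin q → ℝ | 0 ≤ X k} := by
          ext; simp
        rw [this]
        exact isClosed_iInter fun k => isClosed_le continuous_const (continuous_apply k)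
      have h2 : IsClosed {X : Fin q → ℝ | ∀ k, X k ≤ m k} := by
        have : {X : Fin q → ℝ | ∀ k, X k ≤ m k} = ⋂ k, {X : Fin q → ℝ | X k ≤ m k} := by
          ext; simp
        rw [this]
        exact isClosed_iInter fun k => isClosed_le (continuous_apply k) continuous_const
      have h3 : IsClosed {X : Fin q → ℝ | ∑ k, X k = R} :=
        isClosed_eq (by continuity) continuous_const
      have : S = {X | ∀ k, 0 ≤ X k} ∩ ({X | ∀ k, X k ≤ m k} ∩ {X | ∑ k, X k = R}) := by
        ext X; simp [hSdef, Set.mem_setOf_eq, and_assoc]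
      rw [this]; exact h1.inter (h2.inter h3)
    exact (isCompact_Icc).of_isClosed_subset hclosed hsub
  -- Potential
  set Φ : (Fin q → ℝ) → ℝ := fun X => ∑ k, ∫ t in (0:ℝ)..(X k), f k t with hΦ
  have hInt : ∀ (k : Fin q) (a b : ℝ), IntervalIntegrable (f k) volume a b :=
    fun k a b => (hcont k).intervalIntegrable a b
  have hΦcont : Continuous Φ := by
    apply continuous_finset_sum
    intro k _
    exact (intervalIntegral.continuous_primitive (hInt k) 0).comp (continuous_apply k)
  obtain ⟨X, hXS, hXmin⟩ := hScomp.exists_isMinOn hSne hΦcont.continuousOn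
  obtain ⟨hX0, hXm, hXsum⟩ := hXS
  refine ⟨X, hX0, hXsum, hXm, ?_⟩
  intro k l hk hl
  by_contra hlt
  push_neg at hlt
  have hkl : k ≠ l := by
    rintro rfl; exact absurd hlt (lt_irrefl _)
  -- find ε
  set g : ℝ → ℝ := fun ε => f l (X l + ε) - f k (X k - ε) with hg
  have hgcont : Continuous g := by
    exact ((hcont l).comp (continuous_const.add continuous_id)).sub
      ((hcont k).comp (continuous_const.sub continuous_id))
  have hg0 : g 0 < 0 := by simp [hg, sub_neg, hlt]
  have hev : ∀ᶠ ε in nhds (0:ℝ), g ε < 0 :=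
    (hgcont.tendsto 0).eventually (gt_mem_nhds hg0)
  obtain ⟨η, hη, hηg⟩ := Metric.eventually_nhds_iff.1 hev
  set ε : ℝ := min (min (η/2) (X k)) (m l - X l) with hε
  have hε0 : 0 < ε := by
    apply lt_min (lt_min (by linarith) hk) (by linarith)
  have hεη : ε < η := lt_of_le_of_lt (le_trans (min_le_left _ _) (min_le_left _ _)) (by linarith)
  have hεXk : ε ≤ X k := le_trans (min_le_left _ _) (min_le_right _ _)
  have hεml : ε ≤ m l - X l := min_le_right _ _
  have hgε : g ε < 0 := hηg (by rw [Real.dist_eq]; rw [sub_zero]; rw [abs_of_pos hε0]; exact hεη)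
  -- new point
  set Y : Fin q → ℝ := Function.update (Function.update X k (X k - ε)) l (X l + ε) with hYdef
  have hYS : Y ∈ S := by
    have hYval : ∀ j, Y j = if j = l then X l + ε else if j = k then X k - ε else X j := by
      intro j
      rcases eq_or_ne j l with rfl | hjl
      · simp [hYdef]
      · rcases eq_or_ne j k with rfl | hjk
        · simp [hYdef, Function.update_of_ne hkl, hjl]
        · simp [hYdef, Function.update_of_ne hjl, Function.update_of_ne hjk, hjl, hjk]
    refine ⟨?_, ?_, ?_⟩
    · intro j
      rw [hYval j]
      split_ifs with h1 h2
      · have := hX0 l; linarith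
      · linarith
      · exact hX0 j
    · intro j
      rw [hYval j]
      split_ifs with h1 h2
      · rw [h1]; linarith
      · rw [h2]; linarith [hXm k]
      · exact hXm j
    · have := sum_updG X hkl (X k - ε) (X l + ε) (fun _ x => x)
      rw [← hYdef] at this
      rw [this, hXsum]; ring
  -- potential decreases
  have hΦY : Φ Y = Φ X - (∫ t in (0:ℝ)..(X k), f k t) - (∫ t in (0:ℝ)..(X l), f l t)
      + (∫ t in (0:ℝ)..(X k - ε), f k t) + (∫ t in (0:ℝ)..(X l + ε), f l t) := by
    have := sum_updG X hkl (X k - ε) (X l + ε) (fun j x => ∫ t in (0:ℝ)..x, f j t)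
    rw [← hYdef] at this
    exact this
  have hdiffk : (∫ t in (0:ℝ)..(X k), f k t) - (∫ t in (0:ℝ)..(X k - ε), f k t)
      = ∫ t in (X k - ε)..(X k), f k t :=
    intervalIntegral.integral_interval_sub_left (hInt k 0 (X k)) (hInt k 0 (X k - ε))
  have hdiffl : (∫ t in (0:ℝ)..(X l + ε), f l t) - (∫ t in (0:ℝ)..(X l), f l t)
      = ∫ t in (X l)..(X l + ε), f l t :=
    intervalIntegral.integral_interval_sub_left (hInt l 0 (X l + ε)) (hInt l 0 (X l))
  have hub : (∫ t in (X l)..(X l + ε), f l t) ≤ ε * f l (X l + ε) := by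
    have h1 : (∫ t in (X l)..(X l + ε), f l t) ≤ ∫ _t in (X l)..(X l + ε), f l (X l + ε) :=
      intervalIntegral.integral_mono_on (by linarith) (hInt l _ _)
        (intervalIntegrable_const) (fun x hx => hmono l hx.2)
    simpa using h1
  have hlb : ε * f k (X k - ε) ≤ ∫ t in (X k - ε)..(X k), f k t := by
    have h1 : (∫ _t in (X k - ε)..(X k), f k (X k - ε)) ≤ ∫ t in (X k - ε)..(X k), f k t :=
      intervalIntegral.integral_mono_on (by linarith)
        (intervalIntegrable_const) (hInt k _ _) (fun x hx => hmono k hx.1)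
    rw [intervalIntegral.integral_const, smul_eq_mul, show X k - (X k - ε) = ε by ring] at h1
    exact h1
  have hdec : Φ Y < Φ X := by
    have hgε' : f l (X l + ε) - f k (X k - ε) < 0 := hgε
    have : Φ Y - Φ X = (∫ t in (X l)..(X l + ε), f l t) - ∫ t in (X k - ε)..(X k), f k t := by
      rw [hΦY]; linarith [hdiffk, hdiffl]
    have hneg : (∫ t in (X l)..(X l + ε), f l t) - (∫ t in (X k - ε)..(X k), f k t)
        ≤ ε * (f l (X l + ε) - f k (X k - ε)) := by
      rw [mul_sub]; linarith [hub, hlb]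
    have hfin : Φ Y - Φ X ≤ ε * (f l (X l + ε) - f k (X k - ε)) := this.trans_le hneg
    nlinarith [mul_neg_of_pos_of_neg hε0 hgε', hfin]
  exact absurd (hXmin hYS) (not_le.2 hdec)
end

section
/- Let q be a natural number, R ≥ 0, and for each k : Fin q let f_k : ℝ → ℝ be continuous and monotone nondecreasing. Let D = {X : Fin q → ℝ | X_k ≥ 0 for all k, Σ_k X_k = R}. If X ∈ D minimizes the Beckmann potential Φ(X) = Σ_k ∫₀^{X_k} f_k(t) dt over D, then for all k, l : Fin q, X_k > 0 implies f_k(X_k) ≤ f_l(X_l). -/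
open Filter Set intervalIntegral

lemma sum_update_real (q : ℕ) (Z : Fin q → ℝ) (i : Fin q) (b : ℝ) :
    ∑ j, Function.update Z i b j = (∑ j, Z j) - Z i + b := by
  classical
  rw [Finset.sum_update_of_mem (Finset.mem_univ i)]
  have := Finset.sum_eq_sum_sdiff_singleton_add (Finset.mem_univ i) Z
  linarith

lemma sum_update_integral (q : ℕ) (f : Fin q → ℝ → ℝ) (Z : Fin q → ℝ)
    (i : Fin q) (b : ℝ) :
    ∑ j, (∫ t in (0:ℝ)..(Function.update Z i b j), f j t)
      = (∑ j, ∫ t in (0:ℝ)..Z j, f j t)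
        - (∫ t in (0:ℝ)..Z i, f i t) + ∫ t in (0:ℝ)..b, f i t := by
  classical
  rw [← Finset.sum_erase_add _ _ (Finset.mem_univ i),
      ← Finset.sum_erase_add _ (fun j => ∫ t in (0:ℝ)..Z j, f j t) (Finset.mem_univ i)]
  have h1 : ∀ j ∈ Finset.univ.erase i,
      (∫ t in (0:ℝ)..(Function.update Z i b j), f j t) = ∫ t in (0:ℝ)..Z j, f j t := by
    intro j hj
    rw [Function.update_of_ne (Finset.ne_of_mem_erase hj)]
  rw [Finset.sum_congr rfl h1, Function.update_self]
  ring

/-- Every minimizer of the Beckmann potential over the demand simplex is a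
Wardrop (Nash) equilibrium. -/
theorem stmt_7 (q : ℕ) (R : ℝ) (hR : 0 ≤ R)
    (f : Fin q → ℝ → ℝ)
    (hcont : ∀ k, Continuous (f k)) (hmono : ∀ k, Monotone (f k))
    (X : Fin q → ℝ) (hX : ∀ k, 0 ≤ X k) (hXsum : ∑ k, X k = R)
    (hmin : ∀ Y : Fin q → ℝ, (∀ k, 0 ≤ Y k) → (∑ k, Y k = R) →
      (∑ k, ∫ t in (0:ℝ)..X k, f k t) ≤ ∑ k, ∫ t in (0:ℝ)..Y k, f k t) :
    ∀ k l, 0 < X k → f k (X k) ≤ f l (X l) := by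
  intro k l hk
  rcases eq_or_ne k l with rfl | hkl
  · exact le_refl _
  have key : ∀ ε : ℝ, 0 < ε → ε ≤ X k → f k (X k - ε) ≤ f l (X l + ε) := by
    intro ε hε hεle
    set a := X k - ε with ha
    set b := X l + ε with hb
    set Y : Fin q → ℝ := Function.update (Function.update X k a) l b with hY
    have hul : Function.update X k a l = X l := Function.update_of_ne (Ne.symm hkl) _ _
    have hYk : Y k = a := by
      simp [hY, Function.update_of_ne hkl]
    have hYnn : ∀ j, 0 ≤ Y j := by
      intro j
      rcases eq_or_ne j l with rfl | hjl
      · simp only [hY, Function.update_self]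
        have := hX j; linarith
      · rcases eq_or_ne j k with rfl | hjk
        · rw [hYk]; linarith
        · simp [hY, Function.update_of_ne hjl, Function.update_of_ne hjk, hX j]
    have hYsum : ∑ j, Y j = R := by
      rw [hY, sum_update_real, sum_update_real, hul]
      linarith
    have hmin' := hmin Y hYnn hYsum
    rw [hY, sum_update_integral, sum_update_integral, hul] at hmin'
    have hineq : (∫ t in (0:ℝ)..X k, f k t) - (∫ t in (0:ℝ)..a, f k t)
        ≤ (∫ t in (0:ℝ)..b, f l t) - (∫ t in (0:ℝ)..X l, f l t) := by
      linarith
    have hik : (∫ t in (0:ℝ)..X k, f k t) - (∫ t in (0:ℝ)..a, f k t)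
        = ∫ t in a..X k, f k t := by
      rw [← intervalIntegral.integral_interval_sub_left
        ((hcont k).intervalIntegrable 0 (X k)) ((hcont k).intervalIntegrable 0 a)]
    have hil : (∫ t in (0:ℝ)..b, f l t) - (∫ t in (0:ℝ)..X l, f l t)
        = ∫ t in (X l)..b, f l t := by
      rw [← intervalIntegral.integral_interval_sub_left
        ((hcont l).intervalIntegrable 0 b) ((hcont l).intervalIntegrable 0 (X l))]
    rw [hik, hil] at hineq
    have hlo : ε * f k a ≤ ∫ t in a..X k, f k t := by
      have : ∫ t in a..X k, f k a ≤ ∫ t in a..X k, f k t := by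
        apply intervalIntegral.integral_mono_on (by linarith)
          (intervalIntegrable_const) ((hcont k).intervalIntegrable a (X k))
        intro t ht
        exact hmono k ht.1
      rwa [intervalIntegral.integral_const, smul_eq_mul, show X k - a = ε by rw [ha]; ring] at this
    have hhi : (∫ t in (X l)..b, f l t) ≤ ε * f l b := by
      have : ∫ t in (X l)..b, f l t ≤ ∫ t in (X l)..b, f l b := by
        apply intervalIntegral.integral_mono_on (by rw [hb]; linarith)
          ((hcont l).intervalIntegrable (X l) b) (intervalIntegrable_const)
        intro t ht
        exact hmono l ht.2
      rwa [intervalIntegral.integral_const, smul_eq_mul, show b - X l = ε by rw [hb]; ring] at this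
    have : ε * f k a ≤ ε * f l b := by linarith
    exact le_of_mul_le_mul_left (by linarith) hε
  have hT : Tendsto (fun ε : ℝ => f l (X l + ε) - f k (X k - ε)) (nhdsWithin 0 (Ioi 0))
      (nhds (f l (X l) - f k (X k))) := by
    have : Tendsto (fun ε : ℝ => f l (X l + ε) - f k (X k - ε)) (nhds 0)
        (nhds (f l (X l + 0) - f k (X k - 0))) := by
      apply Tendsto.sub
      · exact ((hcont l).comp (continuous_const.add continuous_id)).continuousAt
      · exact ((hcont k).comp (continuous_const.sub continuous_id)).continuousAt
    simpa using this.mono_left nhdsWithin_le_nhds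
  have hev : ∀ᶠ ε in nhdsWithin (0:ℝ) (Ioi 0),
      0 ≤ f l (X l + ε) - f k (X k - ε) := by
    filter_upwards [Ioc_mem_nhdsGT_of_mem ⟨le_refl 0, hk⟩] with ε hε
    have := key ε hε.1 hε.2
    linarith
  have : 0 ≤ f l (X l) - f k (X k) := ge_of_tendsto hT hev
  linarith
end

section
/- Let q be a natural number, R ≥ 0, m : Fin q → ℝ with m_k ≥ 0 for all k, and for each k let f_k : ℝ → ℝ be continuous and strictly monotone increasing on [0, ∞). Let D = {X : Fin q → ℝ | X_k ≥ 0 for all k, Σ_k X_k = R, X_k ≤ m_k for all k}. Then the Beckmann potential Φ(X) = Σ_k ∫₀^{X_k} f_k(t) dt has at most one minimizer on D: if X, X' ∈ D both satisfy Φ(X) ≤ Φ(Y) and Φ(X') ≤ Φ(Y) for all Y ∈ D, then X = X'. -/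
/-!
The Beckmann potential `Φ(X) = ∑ₖ ∫₀^{Xₖ} fₖ` is a separable sum of antiderivatives of strictly
increasing functions, hence strictly convex on the nonnegative orthant. The feasible load polytope
is convex, and a strictly convex function has at most one minimizer on a convex set: the midpoint of
two distinct minimizers would be strictly better than both.
-/

open Finset

theorem strictConvexOn_integral_of_strictMonoOn {f : ℝ → ℝ} {s : Set ℝ} (a : ℝ)
    (hs : Convex ℝ s) (hcont : Continuous f) (hmono : StrictMonoOn f s) :
    StrictConvexOn ℝ s (fun x => ∫ t in a..x, f t) := by
  refine StrictMonoOn.strictConvexOn_of_deriv hs ?_ ?_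
  · exact (intervalIntegral.continuous_primitive
      (fun _ _ => hcont.intervalIntegrable _ _) a).continuousOn
  · have hderiv : deriv (fun x => ∫ t in a..x, f t) = f := funext (hcont.deriv_integral f a)
    rw [hderiv]
    exact hmono.mono interior_subset

theorem StrictConvexOn.sum_pi {ι E : Type*} [Fintype ι] [AddCommGroup E] [Module ℝ E]
    {s : ι → Set E} {g : ι → E → ℝ} (hg : ∀ i, StrictConvexOn ℝ (s i) (g i)) :
    StrictConvexOn ℝ (Set.univ.pi s) (fun x => ∑ i, g i (x i)) := by
  refine ⟨convex_pi fun i _ => (hg i).1, fun x hx y hy hxy a b ha hb hab => ?_⟩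
  obtain ⟨j, hj⟩ : ∃ j, x j ≠ y j := Function.ne_iff.mp hxy
  simp only [Set.mem_univ_pi] at hx hy
  calc ∑ i, g i ((a • x + b • y) i)
      < ∑ i, (a • g i (x i) + b • g i (y i)) := by
        refine sum_lt_sum (fun i _ => (hg i).convexOn.2 (hx i) (hy i) ha.le hb.le hab)
          ⟨j, mem_univ j, (hg j).2 (hx j) (hy j) hj ha hb hab⟩
    _ = a • ∑ i, g i (x i) + b • ∑ i, g i (y i) := by
        rw [sum_add_distrib, smul_sum, smul_sum]

def loadPolytope {ι : Type*} [Fintype ι] (R : ℝ) (m : ι → ℝ) : Set (ι → ℝ) :=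
  {X | (∀ k, 0 ≤ X k) ∧ ∑ k, X k = R ∧ ∀ k, X k ≤ m k}

theorem loadPolytope_subset_pi_Ici {ι : Type*} [Fintype ι] (R : ℝ) (m : ι → ℝ) :
    loadPolytope R m ⊆ Set.univ.pi fun _ => Set.Ici 0 :=
  fun _ hX k _ => hX.1 k

theorem convex_loadPolytope {ι : Type*} [Fintype ι] (R : ℝ) (m : ι → ℝ) :
    Convex ℝ (loadPolytope R m) := by
  have hsum : Convex ℝ {X : ι → ℝ | ∑ k, X k = R} :=
    convex_hyperplane ⟨fun X Y => sum_add_distrib, fun c X => (mul_sum _ _ _).symm⟩ R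
  have hbox : Convex ℝ (Set.univ.pi fun k => Set.Icc 0 (m k)) :=
    convex_pi fun k _ => convex_Icc 0 (m k)
  convert hbox.inter hsum using 1
  ext X
  simp only [loadPolytope, Set.mem_ofPred_eq, Set.mem_inter_iff, Set.mem_univ_pi, Set.mem_Icc]
  exact ⟨fun ⟨h0, hR, hm⟩ => ⟨fun k => ⟨h0 k, hm k⟩, hR⟩,
    fun ⟨h, hR⟩ => ⟨fun k => (h k).1, hR, fun k => (h k).2⟩⟩

theorem stmt_8_general (q : ℕ) (R : ℝ)
    (m : Fin q → ℝ)
    (f : Fin q → ℝ → ℝ)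
    (hcont : ∀ k, Continuous (f k))
    (hmono : ∀ k, StrictMonoOn (f k) (Set.Ici (0 : ℝ)))
    (X X' : Fin q → ℝ)
    (hX : (∀ k, 0 ≤ X k) ∧ (∑ k, X k = R) ∧ (∀ k, X k ≤ m k))
    (hX' : (∀ k, 0 ≤ X' k) ∧ (∑ k, X' k = R) ∧ (∀ k, X' k ≤ m k))
    (hXmin : ∀ Y : Fin q → ℝ, (∀ k, 0 ≤ Y k) → (∑ k, Y k = R) → (∀ k, Y k ≤ m k) →
      (∑ k, ∫ t in (0:ℝ)..X k, f k t) ≤ ∑ k, ∫ t in (0:ℝ)..Y k, f k t)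
    (hX'min : ∀ Y : Fin q → ℝ, (∀ k, 0 ≤ Y k) → (∑ k, Y k = R) → (∀ k, Y k ≤ m k) →
      (∑ k, ∫ t in (0:ℝ)..X' k, f k t) ≤ ∑ k, ∫ t in (0:ℝ)..Y k, f k t) :
    X = X' := by
  have hΦ : StrictConvexOn ℝ (loadPolytope R m) fun Y => ∑ k, ∫ t in (0:ℝ)..Y k, f k t :=
    (StrictConvexOn.sum_pi fun k => strictConvexOn_integral_of_strictMonoOn 0 (convex_Ici 0)
      (hcont k) (hmono k)).subset (loadPolytope_subset_pi_Ici R m) (convex_loadPolytope R m)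
  exact hΦ.eq_of_isMinOn (fun Y ⟨h0, hR, hm⟩ => hXmin Y h0 hR hm)
    (fun Y ⟨h0, hR, hm⟩ => hX'min Y h0 hR hm) hX hX'

/-- Uniqueness of the minimizer of the Beckmann potential over the capacitated
feasible polytope, when each latency function is continuous and strictly
increasing on `[0, ∞)`. -/
theorem stmt_8 (q : ℕ) (R : ℝ) (hR : 0 ≤ R)
    (m : Fin q → ℝ) (hm : ∀ k, 0 ≤ m k)
    (f : Fin q → ℝ → ℝ)
    (hcont : ∀ k, Continuous (f k))
    (hmono : ∀ k, StrictMonoOn (f k) (Set.Ici (0 : ℝ)))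
    (X X' : Fin q → ℝ)
    (hX : (∀ k, 0 ≤ X k) ∧ (∑ k, X k = R) ∧ (∀ k, X k ≤ m k))
    (hX' : (∀ k, 0 ≤ X' k) ∧ (∑ k, X' k = R) ∧ (∀ k, X' k ≤ m k))
    (hXmin : ∀ Y : Fin q → ℝ, (∀ k, 0 ≤ Y k) → (∑ k, Y k = R) → (∀ k, Y k ≤ m k) →
      (∑ k, ∫ t in (0:ℝ)..X k, f k t) ≤ ∑ k, ∫ t in (0:ℝ)..Y k, f k t)
    (hX'min : ∀ Y : Fin q → ℝ, (∀ k, 0 ≤ Y k) → (∑ k, Y k = R) → (∀ k, Y k ≤ m k) →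
      (∑ k, ∫ t in (0:ℝ)..X' k, f k t) ≤ ∑ k, ∫ t in (0:ℝ)..Y k, f k t) :
    X = X' :=
  stmt_8_general q R m f hcont hmono X X' hX hX' hXmin hX'min
end

section
/- Let q be a natural number, for each k : Fin q let f_k : ℝ → ℝ be continuous and monotone nondecreasing, and let D be a convex subset of {X : Fin q → ℝ | X_k ≥ 0 for all k}. If X, X' ∈ D both minimize the Beckmann potential Φ(Y) = Σ_k ∫₀^{Y_k} f_k(t) dt over D, then f_k(X_k) = f_k(X'_k) for every k : Fin q. -/
open Filter Topology MeasureTheory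

private lemma int_le_aux (f : ℝ → ℝ) (hc : Continuous f) (hm : Monotone f)
    {c d : ℝ} (h : c ≤ d) : (∫ t in c..d, f t) ≤ f d * (d - c) := by
  have := intervalIntegral.integral_mono_on h (hc.intervalIntegrable c d)
    (intervalIntegrable_const (μ := volume) (c := f d)) (fun x hx => hm hx.2)
  simpa [mul_comm] using this

private lemma le_int_aux (f : ℝ → ℝ) (hc : Continuous f) (hm : Monotone f)
    {c d : ℝ} (h : c ≤ d) : f c * (d - c) ≤ ∫ t in c..d, f t := by
  have := intervalIntegral.integral_mono_on h
    (intervalIntegrable_const (μ := volume) (c := f c)) (hc.intervalIntegrable c d)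
    (fun x hx => hm hx.1)
  simpa [mul_comm] using this

private lemma mid_le_aux (f : ℝ → ℝ) (hc : Continuous f) (hm : Monotone f)
    {a b : ℝ} (hab : a ≤ b) :
    (∫ t in (0:ℝ)..(a+b)/2, f t) ≤
      ((∫ t in (0:ℝ)..a, f t) + ∫ t in (0:ℝ)..b, f t)/2 := by
  set m := (a+b)/2 with hm'
  have ham : a ≤ m := by simp only [hm']; linarith
  have hmb : m ≤ b := by simp only [hm']; linarith
  have h1 : (∫ t in (0:ℝ)..m, f t) = (∫ t in (0:ℝ)..a, f t) + ∫ t in a..m, f t :=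
    (intervalIntegral.integral_add_adjacent_intervals (hc.intervalIntegrable 0 a)
      (hc.intervalIntegrable a m)).symm
  have h2 : (∫ t in (0:ℝ)..b, f t) = (∫ t in (0:ℝ)..m, f t) + ∫ t in m..b, f t :=
    (intervalIntegral.integral_add_adjacent_intervals (hc.intervalIntegrable 0 m)
      (hc.intervalIntegrable m b)).symm
  have h3 : (∫ t in a..m, f t) ≤ f m * (m - a) := int_le_aux f hc hm ham
  have h4 : f m * (b - m) ≤ ∫ t in m..b, f t := le_int_aux f hc hm hmb
  have h5 : m - a = b - m := by simp only [hm']; ring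
  have h6 : f m * (m - a) = f m * (b - m) := by rw [h5]
  linarith

private lemma mid_eq_aux (f : ℝ → ℝ) (hc : Continuous f)
    {a b : ℝ} (hab : a ≤ b)
    (h : (∫ t in (0:ℝ)..(a+b)/2, f t) =
      ((∫ t in (0:ℝ)..a, f t) + ∫ t in (0:ℝ)..b, f t)/2) :
    (∫ t in a..(a+b)/2, f t) = ∫ t in ((a+b)/2)..b, f t := by
  set m := (a+b)/2 with hm'
  have h1 : (∫ t in (0:ℝ)..m, f t) = (∫ t in (0:ℝ)..a, f t) + ∫ t in a..m, f t :=
    (intervalIntegral.integral_add_adjacent_intervals (hc.intervalIntegrable 0 a)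
      (hc.intervalIntegrable a m)).symm
  have h2 : (∫ t in (0:ℝ)..b, f t) = (∫ t in (0:ℝ)..m, f t) + ∫ t in m..b, f t :=
    (intervalIntegral.integral_add_adjacent_intervals (hc.intervalIntegrable 0 m)
      (hc.intervalIntegrable m b)).symm
  linarith

private lemma key_aux (f : ℝ → ℝ) (hc : Continuous f) (hm : Monotone f)
    {a b : ℝ} (hab : a ≤ b)
    (hI : (∫ t in a..(a+b)/2, f t) = ∫ t in ((a+b)/2)..b, f t) : f a = f b := by
  rcases eq_or_lt_of_le hab with rfl | hab'
  · rfl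
  set m := (a+b)/2 with hm'
  have ham : a < m := by simp only [hm']; linarith
  have hmb : m < b := by simp only [hm']; linarith
  have h3 : (∫ t in a..m, f t) ≤ f m * (m - a) := int_le_aux f hc hm ham.le
  have h4 : f m * (b - m) ≤ ∫ t in m..b, f t := le_int_aux f hc hm hmb.le
  have h5 : m - a = b - m := by simp only [hm']; ring
  -- equalities
  have h6 : f m * (m - a) = f m * (b - m) := by rw [h5]
  have hA : (∫ t in a..m, f t) = f m * (m - a) := by linarith
  have hB : (∫ t in m..b, f t) = f m * (b - m) := by linarith
  -- f = f m on Ioc a m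
  have hIoc : ∀ t ∈ Set.Ioc a m, f t = f m := by
    intro t ht
    have hsplit : (∫ s in a..m, f s) = (∫ s in a..t, f s) + ∫ s in t..m, f s :=
      (intervalIntegral.integral_add_adjacent_intervals (hc.intervalIntegrable a t)
        (hc.intervalIntegrable t m)).symm
    have h6 : (∫ s in a..t, f s) ≤ f t * (t - a) := int_le_aux f hc hm ht.1.le
    have h7 : (∫ s in t..m, f s) ≤ f m * (m - t) := int_le_aux f hc hm ht.2
    have h8 : f m ≤ f t := by nlinarith [ht.1]
    exact le_antisymm (hm ht.2) h8
  -- f = f m on Ico m b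
  have hIco : ∀ t ∈ Set.Ico m b, f t = f m := by
    intro t ht
    have hsplit : (∫ s in m..b, f s) = (∫ s in m..t, f s) + ∫ s in t..b, f s :=
      (intervalIntegral.integral_add_adjacent_intervals (hc.intervalIntegrable m t)
        (hc.intervalIntegrable t b)).symm
    have h6 : f m * (t - m) ≤ ∫ s in m..t, f s := le_int_aux f hc hm ht.1
    have h7 : f t * (b - t) ≤ ∫ s in t..b, f s := le_int_aux f hc hm ht.2.le
    have h8 : f t ≤ f m := by nlinarith [ht.2]
    exact le_antisymm h8 (hm ht.1)
  -- f a = f m by continuity from the right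
  have hfa : f a = f m := by
    have hne : (𝓝[>] a).NeBot := nhdsGT_neBot a
    have hIocmem : Set.Ioc a m ∈ 𝓝[>] a := Ioc_mem_nhdsGT_of_mem ⟨le_refl a, ham⟩
    have h1 : Filter.Tendsto f (𝓝[>] a) (𝓝 (f a)) :=
      (hc.continuousAt (x := a)).tendsto.mono_left nhdsWithin_le_nhds
    have h2 : Filter.Tendsto f (𝓝[>] a) (𝓝 (f m)) := by
      refine Filter.Tendsto.congr' ?_ tendsto_const_nhds
      filter_upwards [hIocmem] with t ht using (hIoc t ht).symm
    exact tendsto_nhds_unique h1 h2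
  -- f b = f m by continuity from the left
  have hfb : f b = f m := by
    have hne : (𝓝[<] b).NeBot := nhdsLT_neBot b
    have hIcomem : Set.Ico m b ∈ 𝓝[<] b := Ico_mem_nhdsLT_of_mem ⟨hmb, le_refl b⟩
    have h1 : Filter.Tendsto f (𝓝[<] b) (𝓝 (f b)) :=
      (hc.continuousAt (x := b)).tendsto.mono_left nhdsWithin_le_nhds
    have h2 : Filter.Tendsto f (𝓝[<] b) (𝓝 (f m)) := by
      refine Filter.Tendsto.congr' ?_ tendsto_const_nhds
      filter_upwards [hIcomem] with t ht using (hIco t ht).symm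
    exact tendsto_nhds_unique h1 h2
  rw [hfa, hfb]

/-- Essential uniqueness of equilibrium costs: any two minimizers of the Beckmann
potential over a convex subset of the nonnegative orthant induce the same per-unit
cost on every node. -/
theorem stmt_9 (q : ℕ) (f : Fin q → ℝ → ℝ)
    (hcont : ∀ k, Continuous (f k)) (hmono : ∀ k, Monotone (f k))
    (D : Set (Fin q → ℝ)) (hD : Convex ℝ D)
    (hDsub : D ⊆ {X : Fin q → ℝ | ∀ k, 0 ≤ X k})
    (X X' : Fin q → ℝ) (hX : X ∈ D) (hX' : X' ∈ D)
    (hXmin : ∀ Y ∈ D,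
      (∑ k, ∫ t in (0:ℝ)..X k, f k t) ≤ ∑ k, ∫ t in (0:ℝ)..Y k, f k t)
    (hX'min : ∀ Y ∈ D,
      (∑ k, ∫ t in (0:ℝ)..X' k, f k t) ≤ ∑ k, ∫ t in (0:ℝ)..Y k, f k t) :
    ∀ k, f k (X k) = f k (X' k) := by
  set M : Fin q → ℝ := fun k => (X k + X' k)/2 with hM'
  have hM : M ∈ D := by
    have h := hD hX hX' (by norm_num : (0:ℝ) ≤ 1/2) (by norm_num : (0:ℝ) ≤ 1/2)
      (by norm_num)
    have : (1/2 : ℝ) • X + (1/2 : ℝ) • X' = M := by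
      funext k; simp [hM', Pi.add_apply, Pi.smul_apply, smul_eq_mul]; ring
    rwa [this] at h
  set u : Fin q → ℝ := fun k => ∫ t in (0:ℝ)..M k, f k t with hu'
  set v : Fin q → ℝ := fun k =>
    ((∫ t in (0:ℝ)..X k, f k t) + ∫ t in (0:ℝ)..X' k, f k t)/2 with hv'
  have hterm : ∀ k ∈ Finset.univ, u k ≤ v k := by
    intro k _
    rcases le_total (X k) (X' k) with h | h
    · exact mid_le_aux (f k) (hcont k) (hmono k) h
    · have := mid_le_aux (f k) (hcont k) (hmono k) h
      simp only [hu', hv', hM']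
      rw [add_comm (X k) (X' k), add_comm (∫ t in (0:ℝ)..X k, f k t)]
      exact this
  have hPhi : (∑ k, ∫ t in (0:ℝ)..X k, f k t) = ∑ k, ∫ t in (0:ℝ)..X' k, f k t :=
    le_antisymm (hXmin X' hX') (hX'min X hX)
  have hsumv : ∑ k, v k = ∑ k, ∫ t in (0:ℝ)..X k, f k t := by
    simp only [hv']
    rw [← Finset.sum_div, Finset.sum_add_distrib, ← hPhi]
    ring
  have hsum_le : ∑ k, v k ≤ ∑ k, u k := by
    rw [hsumv]; exact hXmin M hM
  have hsumeq : ∑ k, u k = ∑ k, v k :=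
    le_antisymm (Finset.sum_le_sum hterm) hsum_le
  have heach : ∀ k ∈ Finset.univ, u k = v k :=
    (Finset.sum_eq_sum_iff_of_le hterm).1 hsumeq
  intro k
  have hk := heach k (Finset.mem_univ k)
  simp only [hu', hv', hM'] at hk
  rcases le_total (X k) (X' k) with h | h
  · exact key_aux (f k) (hcont k) (hmono k) h
      (mid_eq_aux (f k) (hcont k) h hk)
  · have hk2 : (∫ t in (0:ℝ)..(X' k + X k)/2, f k t) =
        ((∫ t in (0:ℝ)..X' k, f k t) + ∫ t in (0:ℝ)..X k, f k t)/2 := by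
      rw [add_comm (X' k) (X k), add_comm (∫ t in (0:ℝ)..X' k, f k t)]
      exact hk
    exact (key_aux (f k) (hcont k) (hmono k) h
      (mid_eq_aux (f k) (hcont k) h hk2)).symm
end

section
/- Let q be a natural number, R ≥ 0, and f_k : ℝ → ℝ for k : Fin q. Suppose X : Fin q → ℝ satisfies X_k ≥ 0 for all k, Σ_k X_k = R, and for all k, l : Fin q, X_k > 0 implies f_k(X_k) ≤ f_l(X_l). Then for every Y : Fin q → ℝ with Y_k ≥ 0 for all k and Σ_k Y_k = R, one has Σ_k f_k(X_k) · X_k ≤ Σ_k f_k(X_k) · Y_k. -/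
/-- Variational inequality: a Wardrop equilibrium load is cheapest with respect to
its own equilibrium per-unit prices among all feasible loads. -/
theorem stmt_10 (q : ℕ) (R : ℝ) (hR : 0 ≤ R) (f : Fin q → ℝ → ℝ)
    (X : Fin q → ℝ) (hX : ∀ k, 0 ≤ X k) (hXsum : ∑ k, X k = R)
    (heq : ∀ k l, 0 < X k → f k (X k) ≤ f l (X l)) :
    ∀ Y : Fin q → ℝ, (∀ k, 0 ≤ Y k) → (∑ k, Y k = R) →
      (∑ k, f k (X k) * X k) ≤ ∑ k, f k (X k) * Y k := by
  intro Y hY hYsum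
  by_cases h : ∃ k0, 0 < X k0
  · obtain ⟨k0, hk0⟩ := h
    set c := f k0 (X k0) with hc
    have hge : ∀ k, c ≤ f k (X k) := fun k => heq k0 k hk0
    have hXval : ∀ k, f k (X k) * X k = c * X k := by
      intro k
      rcases eq_or_lt_of_le (hX k) with h0 | hpos
      · rw [← h0]; ring
      · rw [le_antisymm (heq k k0 hpos) (hge k)]
    calc ∑ k, f k (X k) * X k = ∑ k, c * X k := by simp_rw [hXval]
      _ = c * R := by rw [← Finset.mul_sum, hXsum]
      _ = ∑ k, c * Y k := by rw [← Finset.mul_sum, hYsum]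
      _ ≤ ∑ k, f k (X k) * Y k :=
        Finset.sum_le_sum fun k _ => mul_le_mul_of_nonneg_right (hge k) (hY k)
  · push_neg at h
    have hX0 : ∀ k, X k = 0 := fun k => le_antisymm (h k) (hX k)
    have hR0 : R = 0 := by rw [← hXsum]; simp [hX0]
    have hY0 : ∀ k, Y k = 0 := fun k =>
      (Finset.sum_eq_zero_iff_of_nonneg (fun k _ => hY k)).mp
        (by rw [hYsum, hR0]) k (Finset.mem_univ k)
    simp [hX0, hY0]
end

section
/- Let q be a natural number, R ≥ 0, and for each k : Fin q let f_k(t) = a_k · t + b_k with a_k ≥ 0 and b_k ≥ 0. Suppose X : Fin q → ℝ satisfies X_k ≥ 0 for all k, Σ_k X_k = R, and for all k, l : Fin q, X_k > 0 implies f_k(X_k) ≤ f_l(X_l). Then for every Y : Fin q → ℝ with Y_k ≥ 0 for all k and Σ_k Y_k = R, one has Σ_k X_k · f_k(X_k) ≤ (4/3) · Σ_k Y_k · f_k(Y_k). -/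
/-- 4/3 price-of-anarchy bound: for affine latency functions with nonnegative
coefficients, the total cost at a Wardrop (Nash) equilibrium is at most 4/3 of
the total cost of any feasible load vector. -/
theorem stmt_12 (q : ℕ) (R : ℝ) (hR : 0 ≤ R)
    (a b : Fin q → ℝ) (ha : ∀ k, 0 ≤ a k) (hb : ∀ k, 0 ≤ b k)
    (f : Fin q → ℝ → ℝ) (hf : ∀ k t, f k t = a k * t + b k)
    (X : Fin q → ℝ) (hX : ∀ k, 0 ≤ X k) (hXsum : ∑ k, X k = R)
    (heq : ∀ k l, 0 < X k → f k (X k) ≤ f l (X l)) :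
    ∀ Y : Fin q → ℝ, (∀ k, 0 ≤ Y k) → (∑ k, Y k = R) →
      (∑ k, X k * f k (X k)) ≤ (4 / 3) * ∑ k, Y k * f k (Y k) := by
  intro Y hY hYsum
  have hVI : (∑ k, X k * f k (X k)) ≤ ∑ k, Y k * f k (X k) := by
    by_cases hR0 : ∃ k0, 0 < X k0
    · obtain ⟨k0, hk0⟩ := hR0
      set c := f k0 (X k0) with hc
      have hLHS : (∑ k, X k * f k (X k)) = c * R := by
        rw [← hXsum, Finset.mul_sum]
        apply Finset.sum_congr rfl
        intro k _
        rcases lt_or_eq_of_le (hX k) with h | h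
        · have h1 := heq k k0 h
          have h2 := heq k0 k hk0
          have he : f k (X k) = c := le_antisymm h1 h2
          rw [he]; ring
        · rw [← h]; ring
      have hRHS : c * R ≤ ∑ k, Y k * f k (X k) := by
        rw [← hYsum, Finset.mul_sum]
        apply Finset.sum_le_sum
        intro k _
        have h2 := heq k0 k hk0
        nlinarith [hY k]
      linarith
    · push_neg at hR0
      have hX0 : ∀ k, X k = 0 := fun k => le_antisymm (hR0 k) (hX k)
      have hz : (∑ k, X k * f k (X k)) = 0 := by
        apply Finset.sum_eq_zero; intro k _; rw [hX0 k]; ring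
      rw [hz]
      apply Finset.sum_nonneg
      intro k _
      have : 0 ≤ f k (X k) := by rw [hf, hX0 k]; nlinarith [ha k, hb k]
      exact mul_nonneg (hY k) this
  have hkey : (∑ k, Y k * f k (X k)) ≤ (∑ k, Y k * f k (Y k)) + (1/4) * ∑ k, X k * f k (X k) := by
    rw [Finset.mul_sum, ← Finset.sum_add_distrib]
    apply Finset.sum_le_sum
    intro k _
    simp only [hf]
    nlinarith [ha k, hb k, hX k, hY k, mul_nonneg (ha k) (sq_nonneg (X k / 2 - Y k)),
      mul_nonneg (hb k) (hX k)]
  linarith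
end

section
/- Let q be a natural number, R ≥ 0, and for each k : Fin q let f_k(t) = a_k · t with a_k > 0. Suppose X : Fin q → ℝ satisfies X_k ≥ 0 for all k, Σ_k X_k = R, and for all k, l : Fin q, X_k > 0 implies f_k(X_k) ≤ f_l(X_l). Then for every Y : Fin q → ℝ with Y_k ≥ 0 for all k and Σ_k Y_k = R, one has Σ_k a_k · X_k² ≤ Σ_k a_k · Y_k², i.e. the Nash equilibrium load minimizes the total cost Σ_k a_k Y_k² over all feasible loads. -/
/-- For purely linear latencies `f_k(t) = a_k·t` with `a_k > 0`, the Wardrop (Nash)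
equilibrium load minimizes the total cost `Σ_k a_k Y_k²` over all feasible loads. -/
theorem stmt_13 (q : ℕ) (R : ℝ) (hR : 0 ≤ R)
    (a : Fin q → ℝ) (ha : ∀ k, 0 < a k)
    (f : Fin q → ℝ → ℝ) (hf : ∀ k t, f k t = a k * t)
    (X : Fin q → ℝ) (hX : ∀ k, 0 ≤ X k) (hXsum : ∑ k, X k = R)
    (heq : ∀ k l, 0 < X k → f k (X k) ≤ f l (X l)) :
    ∀ Y : Fin q → ℝ, (∀ k, 0 ≤ Y k) → (∑ k, Y k = R) →
      (∑ k, a k * (X k) ^ 2) ≤ ∑ k, a k * (Y k) ^ 2 := by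
  intro Y hY hYsum
  by_cases h0 : ∀ k, X k = 0
  · have hz : ∑ k, a k * X k ^ 2 = 0 :=
      Finset.sum_eq_zero (fun k _ => by rw [h0 k]; ring)
    rw [hz]
    exact Finset.sum_nonneg fun k _ => mul_nonneg (ha k).le (sq_nonneg _)
  · push_neg at h0
    obtain ⟨k0, hk0⟩ := h0
    have hk0pos : 0 < X k0 := lt_of_le_of_ne (hX k0) (Ne.symm hk0)
    set c := a k0 * X k0 with hc
    have hcpos : 0 < c := mul_pos (ha k0) hk0pos
    have hall : ∀ l, a l * X l = c := by
      intro l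
      have h1 : c ≤ a l * X l := by
        have := heq k0 l hk0pos
        simpa [hf] using this
      have hlpos : 0 < X l := by
        by_contra h
        push_neg at h
        have hz : X l = 0 := le_antisymm h (hX l)
        rw [hz, mul_zero] at h1; linarith
      have h2 : a l * X l ≤ c := by
        have := heq l k0 hlpos
        simpa [hf] using this
      linarith
    have key : ∑ k, a k * X k * (Y k - X k) = 0 := by
      have hc' : ∀ k ∈ Finset.univ, a k * X k * (Y k - X k) = c * (Y k - X k) :=
        fun k _ => by rw [hall k]
      rw [Finset.sum_congr rfl hc', ← Finset.mul_sum, Finset.sum_sub_distrib,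
        hXsum, hYsum, sub_self, mul_zero]
    have expand : ∑ k, a k * (Y k) ^ 2 - ∑ k, a k * (X k) ^ 2
        = ∑ k, a k * (Y k - X k) ^ 2 + 2 * ∑ k, a k * X k * (Y k - X k) := by
      rw [← Finset.sum_sub_distrib, Finset.mul_sum, ← Finset.sum_add_distrib]
      exact Finset.sum_congr rfl fun k _ => by ring
    have hnn : 0 ≤ ∑ k, a k * (Y k - X k) ^ 2 :=
      Finset.sum_nonneg fun k _ => mul_nonneg (ha k).le (sq_nonneg _)
    linarith [key, expand, hnn]
end
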